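/- arXiv:1611.00159 — 6 statements merged into one kernel-verified Lean document; each statement's English description precedes it below -/
import Mathlib

section
/- If R(r,t) denotes the supremum of rates k/n over all strict-availability codes with parameters (n,k,r,t) over all finite fields, then R(r,t) = 1 − t/(r+1) + (t/(r+1))·R(t−1, r+1). -/
open Finset

/-- `H` is a parity check matrix of a strict availability code with locality `r` and
availability `t`: every row has weight `r+1`, every column has weight `t`, and the
supports of any two distinct rows intersect in at most one coordinate. -/
def IsStrictAvailPCM {F : Type} [Zero F] [DecidableEq F] {m n : ℕ}
    (H : Matrix (Fin m) (Fin n) F) (r t : ℕ) : Prop :=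
  (∀ i : Fin m, (univ.filter (fun j => H i j ≠ 0)).card = r + 1) ∧
  (∀ j : Fin n, (univ.filter (fun i => H i j ≠ 0)).card = t) ∧
  (∀ i₁ i₂ : Fin m, i₁ ≠ i₂ →
    (univ.filter (fun j => H i₁ j ≠ 0 ∧ H i₂ j ≠ 0)).card ≤ 1)

/-- The supremum of rates `k/n` of `(n,k,r,t)` strict availability codes, over all block
lengths `n` and all finite fields; here `k = n - rank H` is the dimension of the null
space of the parity check matrix `H`. -/
noncomputable def supRate (r t : ℕ) : ℝ :=
  sSup {x : ℝ | ∃ (F : Type) (_ : Field F) (_ : Fintype F) (_ : DecidableEq F)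
    (n m : ℕ) (H : Matrix (Fin m) (Fin n) F),
    0 < n ∧ IsStrictAvailPCM H r t ∧ x = ((n - H.rank : ℕ) : ℝ) / n}

/-!
Transposition does everything. If `H` is an `(r, t)` parity check matrix, then `Hᵀ` is a
`(t - 1, r + 1)` one: the row and column weights swap, and the intersection condition is
symmetric. Since `rank Hᵀ = rank H` and double counting gives `m (r + 1) = n t`, the rates
`(n - ρ) / n` of `H` and `(m - ρ) / m` of `Hᵀ` are related by the increasing affine map
`x ↦ 1 - t / (r + 1) + t / (r + 1) * x`, so the two sets of rates correspond under it and so do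
their suprema. The supremum is not taken over the empty set (where `sSup` would be `0`): the
line–point incidence matrix of `F²`, for a large enough prime field `F`, is a witness.
-/

open Matrix

section Support

variable {ι κ F : Type*} [Fintype ι] [Fintype κ] [Zero F] [DecidableEq F]

theorem sum_card_support_row_eq_sum_card_support_col (H : Matrix ι κ F) :
    ∑ i, #{j | H i j ≠ 0} = ∑ j, #{i | H i j ≠ 0} := by
  simp_rw [card_filter]
  exact sum_comm

/-- Both conditions say that no `2 × 2` submatrix of `H` has only nonzero entries. -/
theorem card_common_support_col_le_one {H : Matrix ι κ F}
    (h : ∀ i₁ i₂, i₁ ≠ i₂ → #{j | H i₁ j ≠ 0 ∧ H i₂ j ≠ 0} ≤ 1) {j₁ j₂ : κ} (hj : j₁ ≠ j₂) :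
    #{i | H i j₁ ≠ 0 ∧ H i j₂ ≠ 0} ≤ 1 := by
  refine card_le_one.2 fun i₁ hi₁ i₂ hi₂ => by_contra fun hi => hj ?_
  simp only [mem_filter, mem_univ, true_and] at hi₁ hi₂
  exact card_le_one.1 (h i₁ i₂ hi) j₁ (by simp [hi₁.1, hi₂.1]) j₂ (by simp [hi₁.2, hi₂.2])

end Support

namespace IsStrictAvailPCM

variable {F : Type} [Zero F] [DecidableEq F] {m n r t : ℕ} {H : Matrix (Fin m) (Fin n) F}

theorem height_mul_eq (h : IsStrictAvailPCM H r t) : m * (r + 1) = n * t := by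
  simpa [h.1, h.2.1, mul_comm] using sum_card_support_row_eq_sum_card_support_col H

theorem height_pos (h : IsStrictAvailPCM H r t) (hn : 0 < n) (ht : 0 < t) : 0 < m := by
  have := h.height_mul_eq
  rcases Nat.eq_zero_or_pos m with rfl | hm
  · nlinarith
  · exact hm

end IsStrictAvailPCM

theorem isStrictAvailPCM_transpose_iff {F : Type} [Zero F] [DecidableEq F] {m n r t : ℕ}
    {H : Matrix (Fin m) (Fin n) F} :
    IsStrictAvailPCM Hᵀ r (t + 1) ↔ IsStrictAvailPCM H t (r + 1) :=
  ⟨fun ⟨hrow, hcol, hinter⟩ => ⟨hcol, hrow, fun _ _ => card_common_support_col_le_one hinter⟩,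
    fun ⟨hrow, hcol, hinter⟩ => ⟨hcol, hrow, fun _ _ => card_common_support_col_le_one hinter⟩⟩

theorem isStrictAvailPCM_submatrix_equivFin {ι κ : Type*} {F : Type} [Fintype ι] [Fintype κ]
    [Zero F] [DecidableEq F] {r t : ℕ} (M : Matrix ι κ F) (hrow : ∀ i, #{j | M i j ≠ 0} = r + 1)
    (hcol : ∀ j, #{i | M i j ≠ 0} = t)
    (hinter : ∀ i₁ i₂, i₁ ≠ i₂ → #{j | M i₁ j ≠ 0 ∧ M i₂ j ≠ 0} ≤ 1) :
    IsStrictAvailPCM (M.submatrix (Fintype.equivFin ι).symm (Fintype.equivFin κ).symm) r t := by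
  set eι := (Fintype.equivFin ι).symm
  set eκ := (Fintype.equivFin κ).symm
  refine ⟨fun i => ?_, fun j => ?_, fun i₁ i₂ hi => ?_⟩
  · exact (card_equiv eκ fun _ => by rw [mem_filter]; simp).trans (hrow (eι i))
  · exact (card_equiv eι fun _ => by rw [mem_filter]; simp).trans (hcol (eκ j))
  · exact (card_equiv eκ fun _ => by rw [mem_filter]; simp).trans_le
      (hinter _ _ (eι.injective.ne hi))

noncomputable def codeRate {F : Type} [Field F] {m n : ℕ} (H : Matrix (Fin m) (Fin n) F) : ℝ :=
  ((n - H.rank : ℕ) : ℝ) / n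

theorem IsStrictAvailPCM.codeRate_eq {F : Type} [Field F] [DecidableEq F] {m n r t : ℕ}
    {H : Matrix (Fin m) (Fin n) F} (h : IsStrictAvailPCM H r t) (hn : 0 < n) (ht : 0 < t) :
    codeRate H = 1 - (t : ℝ) / (r + 1) + (t : ℝ) / (r + 1) * codeRate Hᵀ := by
  have hm := h.height_pos hn ht
  have hcount : (m : ℝ) * (r + 1) = n * t := by exact_mod_cast h.height_mul_eq
  have hρn : H.rank ≤ n := H.rank_le_width
  have hρm : H.rank ≤ m := by simpa using H.rank_le_card_height
  unfold codeRate
  rw [rank_transpose, Nat.cast_sub hρn, Nat.cast_sub hρm]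
  field_simp
  linear_combination -(H.rank : ℝ) * hcount

theorem card_filter_snd_eq_apply_fst {α β : Type*} [Fintype α] [Fintype β] [DecidableEq α]
    [DecidableEq β] (f : α → β) : #{q : α × β | q.2 = f q.1} = Fintype.card α := by
  have hinj : Function.Injective fun x => (x, f x) := fun _ _ h => congrArg Prod.fst h
  rw [← card_univ, ← card_image_of_injective univ hinj]
  congr 1
  ext ⟨x, y⟩
  simp [eq_comm]

section LineIncidence

variable {F : Type} [Field F] [DecidableEq F] {a t : ℕ}

/-- Row `(s, b)` is the line `y = σ s * x + b` of `F²`, column `(x, y)` the point `(ξ x, y)`. -/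
def lineIncidence (σ : Fin t ↪ F) (ξ : Fin a ↪ F) : Matrix (Fin t × F) (Fin a × F) F :=
  fun l q => if q.2 = σ l.1 * ξ q.1 + l.2 then 1 else 0

variable {σ : Fin t ↪ F} {ξ : Fin a ↪ F}

theorem lineIncidence_ne_zero {l : Fin t × F} {q : Fin a × F} :
    lineIncidence σ ξ l q ≠ 0 ↔ q.2 = σ l.1 * ξ q.1 + l.2 := by
  simp [lineIncidence]

variable [Fintype F]

theorem card_support_row_lineIncidence (l : Fin t × F) :
    #{q | lineIncidence σ ξ l q ≠ 0} = a := by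
  simp only [lineIncidence_ne_zero]
  simpa using card_filter_snd_eq_apply_fst fun x => σ l.1 * ξ x + l.2

theorem card_support_col_lineIncidence (q : Fin a × F) :
    #{l | lineIncidence σ ξ l q ≠ 0} = t := by
  simp only [lineIncidence_ne_zero, ← sub_eq_iff_eq_add', eq_comm (a := q.2 - _)]
  simpa using card_filter_snd_eq_apply_fst fun s => q.2 - σ s * ξ q.1

theorem card_common_support_lineIncidence_le_one {l₁ l₂ : Fin t × F} (hl : l₁ ≠ l₂) :
    #{q | lineIncidence σ ξ l₁ q ≠ 0 ∧ lineIncidence σ ξ l₂ q ≠ 0} ≤ 1 := by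
  refine card_le_one.2 fun q hq q' hq' => ?_
  simp only [mem_filter, mem_univ, true_and, lineIncidence_ne_zero] at hq hq'
  have hslope : σ l₁.1 ≠ σ l₂.1 := by
    rintro hs
    refine hl (Prod.ext (σ.injective hs) ?_)
    simpa [hs] using hq.1.symm.trans hq.2
  have hx : ξ q.1 = ξ q'.1 :=
    mul_left_cancel₀ (sub_ne_zero.2 hslope) (by linear_combination hq'.1 - hq'.2 - hq.1 + hq.2)
  exact Prod.ext (ξ.injective hx) (by rw [hq.1, hq'.1, hx])

end LineIncidence

def rateSet (r t : ℕ) : Set ℝ :=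
  {x | ∃ (F : Type) (_ : Field F) (_ : Fintype F) (_ : DecidableEq F)
    (n m : ℕ) (H : Matrix (Fin m) (Fin n) F), 0 < n ∧ IsStrictAvailPCM H r t ∧ x = codeRate H}

theorem supRate_eq_sSup_rateSet (r t : ℕ) : supRate r t = sSup (rateSet r t) := rfl

theorem rateSet_nonempty (r t : ℕ) : (rateSet r t).Nonempty := by
  obtain ⟨p, hle, hp⟩ := Nat.exists_infinite_primes (max (r + 1) t)
  have : Fact p.Prime := ⟨hp⟩
  obtain ⟨σ⟩ := Function.Embedding.nonempty_of_card_le (α := Fin t) (β := ZMod p) (by simp; omega)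
  obtain ⟨ξ⟩ :=
    Function.Embedding.nonempty_of_card_le (α := Fin (r + 1)) (β := ZMod p) (by simp; omega)
  refine ⟨_, ZMod p, inferInstance, inferInstance, inferInstance, _, _, _, ?_,
    isStrictAvailPCM_submatrix_equivFin (lineIncidence σ ξ) card_support_row_lineIncidence
      card_support_col_lineIncidence fun _ _ => card_common_support_lineIncidence_le_one, rfl⟩
  exact Fintype.card_pos

theorem codeRate_le_one {F : Type} [Field F] {m n : ℕ} (H : Matrix (Fin m) (Fin n) F) :
    codeRate H ≤ 1 :=
  div_le_one_of_le₀ (by exact_mod_cast Nat.sub_le _ _) (Nat.cast_nonneg _)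

theorem rateSet_bddAbove (r t : ℕ) : BddAbove (rateSet r t) :=
  ⟨1, by rintro _ ⟨F, _, _, _, n, m, H, -, -, rfl⟩; exact codeRate_le_one H⟩

theorem rateSet_eq_image {r t : ℕ} (ht : 0 < t) :
    rateSet r t =
      (fun x => 1 - (t : ℝ) / (r + 1) + (t : ℝ) / (r + 1) * x) '' rateSet (t - 1) (r + 1) := by
  obtain ⟨s, rfl⟩ : ∃ s, t = s + 1 := ⟨t - 1, by omega⟩
  rw [Nat.add_sub_cancel]
  ext x
  constructor
  · rintro ⟨F, hF, hFin, hDec, n, m, H, hn, hH, rfl⟩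
    refine ⟨codeRate Hᵀ, ⟨F, hF, hFin, hDec, m, n, Hᵀ, hH.height_pos hn s.succ_pos,
      isStrictAvailPCM_transpose_iff.1 (by rwa [transpose_transpose]), rfl⟩,
      (hH.codeRate_eq hn s.succ_pos).symm⟩
  · rintro ⟨_, ⟨F, hF, hFin, hDec, n, m, H, hn, hH, rfl⟩, rfl⟩
    have hm : 0 < m := hH.height_pos hn r.succ_pos
    have hHt : IsStrictAvailPCM Hᵀ r (s + 1) := isStrictAvailPCM_transpose_iff.2 hH
    refine ⟨F, hF, hFin, hDec, m, n, Hᵀ, hm, hHt, ?_⟩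
    rw [hHt.codeRate_eq hm s.succ_pos, transpose_transpose]

theorem stmt3_general (r t : ℕ) (ht : 1 ≤ t) :
    supRate r t = 1 - (t : ℝ) / (r + 1) + ((t : ℝ) / (r + 1)) * supRate (t - 1) (r + 1) := by
  have hmono : Monotone fun x : ℝ => 1 - (t : ℝ) / (r + 1) + (t : ℝ) / (r + 1) * x :=
    fun _ _ hxy => by dsimp only; gcongr
  rw [supRate_eq_sSup_rateSet, supRate_eq_sSup_rateSet, rateSet_eq_image ht]
  exact (hmono.map_csSup_of_continuousAt (by fun_prop) (rateSet_nonempty _ _)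
    (rateSet_bddAbove _ _)).symm

/-- `R(r,t) = 1 - t/(r+1) + (t/(r+1)) R(t-1, r+1)`. -/
theorem stmt3 (r t : ℕ) (hr : 1 ≤ r) (ht : 1 ≤ t) :
    supRate r t = 1 - (t : ℝ) / (r + 1) + ((t : ℝ) / (r + 1)) * supRate (t - 1) (r + 1) :=
  stmt3_general r t ht
end

section
/- For every r ≥ 1, the supremum of rates of strict-availability codes with locality r and availability t = 2 satisfies R(r,2) ≤ r/(r+2). -/
open Finset

lemma myDoubleCount {F : Type} [Field F] [Fintype F] [DecidableEq F] {m n r : ℕ}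
    (H : Matrix (Fin m) (Fin n) F) (h : IsStrictAvailPCM H r 2) :
    m * (r + 1) = 2 * n := by
  have key : ∑ i : Fin m, (univ.filter (fun j => H i j ≠ 0)).card
      = ∑ j : Fin n, (univ.filter (fun i => H i j ≠ 0)).card := by
    simp only [Finset.card_filter]
    rw [Finset.sum_comm]
  simp only [h.1, h.2.1, Finset.sum_const, Finset.card_univ, Fintype.card_fin,
    smul_eq_mul] at key
  rw [key, Nat.mul_comm]

lemma myRankBound {F : Type} [Field F] [Fintype F] [DecidableEq F] {m n r : ℕ}
    (H : Matrix (Fin m) (Fin n) F) (h : IsStrictAvailPCM H r 2) :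
    2 * n ≤ (r + 2) * H.rank := by
  classical
  set Rel : Fin m → Fin m → Prop := fun a b => ∃ j, H a j ≠ 0 ∧ H b j ≠ 0 with hRel
  haveI : Fintype (Quot Rel) := Fintype.ofSurjective (Quot.mk Rel) (fun q => Quot.exists_rep q)
  have hcol : ∀ j : Fin n, (univ.filter (fun i => H i j ≠ 0)).card = 2 := h.2.1
  have hpair : ∀ (j : Fin n) (a b : Fin m), a ≠ b → H a j ≠ 0 → H b j ≠ 0 →
      (univ.filter (fun i => H i j ≠ 0)) = {a, b} := by
    intro j a b hab ha hb
    refine (Finset.eq_of_subset_of_card_le ?_ ?_).symm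
    · intro x hx
      simp only [Finset.mem_insert, Finset.mem_singleton] at hx
      rcases hx with h1 | h1 <;> simp [h1, ha, hb]
    · rw [hcol j, Finset.card_insert_of_notMem (by simp [hab]), Finset.card_singleton]
  have hother : ∀ (i : Fin m) (j : Fin n), H i j ≠ 0 → ∃ i', i' ≠ i ∧ H i' j ≠ 0 := by
    intro i j hij
    obtain ⟨a, b, hab, hfe⟩ := Finset.card_eq_two.1 (hcol j)
    have hi : i ∈ ({a, b} : Finset (Fin m)) := by
      rw [← hfe]; simp [hij]
    have hha : H a j ≠ 0 := by
      have : a ∈ univ.filter (fun i => H i j ≠ 0) := hfe ▸ (by simp)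
      simpa using this
    have hhb : H b j ≠ 0 := by
      have : b ∈ univ.filter (fun i => H i j ≠ 0) := hfe ▸ (by simp)
      simpa using this
    rcases Finset.mem_insert.1 hi with h1 | h1
    · exact ⟨b, by rw [h1]; exact hab.symm, hhb⟩
    · rw [Finset.mem_singleton] at h1
      exact ⟨a, by rw [h1]; exact hab, hha⟩
  -- each component has at least r+2 vertices
  have hcomp : ∀ i : Fin m,
      r + 2 ≤ (univ.filter (fun i' => Quot.mk Rel i' = Quot.mk Rel i)).card := by
    intro i
    set s := univ.filter (fun j => H i j ≠ 0) with hs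
    have hscard : s.card = r + 1 := h.1 i
    have hex : ∀ j ∈ s, ∃ i', i' ≠ i ∧ H i' j ≠ 0 := by
      intro j hj
      exact hother i j (by simpa [hs] using hj)
    choose f hf1 hf2 using hex
    have hmem : ∀ j : {x // x ∈ s}, H i j.1 ≠ 0 := by
      intro j
      exact (Finset.mem_filter.1 j.2).2
    have hinj : Set.InjOn (fun j : {x // x ∈ s} => f j.1 j.2) ↑s.attach := by
      intro j1 _ j2 _ heq
      by_contra hne
      have hj12 : (j1 : Fin n) ≠ (j2 : Fin n) := fun hc => hne (Subtype.ext hc)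
      have hii' : i ≠ f j1.1 j1.2 := fun hc => hf1 j1.1 j1.2 hc.symm
      have hsub : ({(j1 : Fin n), (j2 : Fin n)} : Finset (Fin n)) ⊆
          univ.filter (fun j => H i j ≠ 0 ∧ H (f j1.1 j1.2) j ≠ 0) := by
        intro x hx
        simp only [Finset.mem_insert, Finset.mem_singleton] at hx
        simp only [Finset.mem_filter, Finset.mem_univ, true_and]
        have heq' : f j1.1 j1.2 = f j2.1 j2.2 := heq
        rcases hx with h1 | h1 <;> subst h1
        · exact ⟨hmem j1, hf2 j1.1 j1.2⟩
        · exact ⟨hmem j2, by rw [heq']; exact hf2 j2.1 j2.2⟩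
      have h2 : 2 ≤ (univ.filter (fun j => H i j ≠ 0 ∧ H (f j1.1 j1.2) j ≠ 0)).card := by
        calc 2 = ({(j1 : Fin n), (j2 : Fin n)} : Finset (Fin n)).card := by
              rw [Finset.card_insert_of_notMem (by simp [hj12]), Finset.card_singleton]
          _ ≤ _ := Finset.card_le_card hsub
      have := h.2.2 i (f j1.1 j1.2) hii'
      omega
    have himg : (s.attach.image (fun j => f j.1 j.2)).card = r + 1 := by
      rw [Finset.card_image_of_injOn hinj, Finset.card_attach, hscard]
    have hnotmem : i ∉ s.attach.image (fun j => f j.1 j.2) := by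
      simp only [Finset.mem_image]
      rintro ⟨j, hj, hji⟩
      exact hf1 j.1 j.2 hji
    have hsubt : insert i (s.attach.image (fun j => f j.1 j.2)) ⊆
        univ.filter (fun i' => Quot.mk Rel i' = Quot.mk Rel i) := by
      intro x hx
      simp only [Finset.mem_insert, Finset.mem_image] at hx
      simp only [Finset.mem_filter, Finset.mem_univ, true_and]
      rcases hx with rfl | ⟨j, hj, rfl⟩
      · rfl
      · exact Quot.sound ⟨j.1, hf2 j.1 j.2, hmem j⟩
    calc r + 2 = (insert i (s.attach.image (fun j => f j.1 j.2))).card := by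
          rw [Finset.card_insert_of_notMem hnotmem, himg]
      _ ≤ _ := Finset.card_le_card hsubt
  have hQcard : (r + 2) * Fintype.card (Quot Rel) ≤ m := by
    have hm : (univ : Finset (Fin m)).card
        = ∑ q : Quot Rel, (univ.filter (fun i => Quot.mk Rel i = q)).card :=
      Finset.card_eq_sum_card_fiberwise (fun x _ => Finset.mem_univ _)
    calc (r + 2) * Fintype.card (Quot Rel) = ∑ _q : Quot Rel, (r + 2) := by
          simp [mul_comm]
      _ ≤ ∑ q : Quot Rel, (univ.filter (fun i => Quot.mk Rel i = q)).card := by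
          refine Finset.sum_le_sum (fun q _ => ?_)
          obtain ⟨i, rfl⟩ := Quot.exists_rep q
          exact hcomp i
      _ = m := by rw [← hm, Finset.card_univ, Fintype.card_fin]
  -- kernel of the transpose
  set K := LinearMap.ker ((Matrix.transpose H).mulVecLin) with hK
  have hker : ∀ x : (Fin m → F), x ∈ K → (∀ q : Quot Rel, x q.out = 0) → x = 0 := by
    intro x hx h0
    have hsum : ∀ j : Fin n, ∑ i : Fin m, H i j * x i = 0 := by
      intro j
      have := congrFun (LinearMap.mem_ker.1 hx) j
      simpa [Matrix.mulVecLin_apply, Matrix.mulVec, Matrix.vecMul, dotProduct,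
        Matrix.transpose_apply, mul_comm] using this
    have hprop : ∀ (j : Fin n) (a b : Fin m), a ≠ b → H a j ≠ 0 → H b j ≠ 0 →
        x a = 0 → x b = 0 := by
      intro j a b hab ha hb hxa
      have h1 : ∑ i ∈ ({a, b} : Finset (Fin m)), H i j * x i = 0 := by
        rw [← hpair j a b hab ha hb]
        have heq0 : ∑ i ∈ (univ.filter (fun i => H i j ≠ 0)), H i j * x i
            = ∑ i : Fin m, H i j * x i :=
          Finset.sum_filter_of_ne (fun i _ hne hz => hne (by rw [hz, zero_mul]))
        exact heq0.trans (hsum j)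
      rw [Finset.sum_pair hab, hxa, mul_zero, zero_add] at h1
      rcases mul_eq_zero.1 h1 with h2 | h2
      · exact absurd h2 hb
      · exact h2
    have hrel : ∀ a b : Fin m, Rel a b → (x a = 0) = (x b = 0) := by
      rintro a b ⟨j, ha, hb⟩
      by_cases hab : a = b
      · rw [hab]
      · exact propext ⟨hprop j a b hab ha hb, hprop j b a (Ne.symm hab) hb ha⟩
    funext i
    show x i = 0
    have h1 : Quot.lift (fun i => x i = 0) hrel (Quot.mk Rel i)
        = Quot.lift (fun i => x i = 0) hrel (Quot.mk Rel (Quot.mk Rel i).out) := by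
      rw [Quot.out_eq]
    exact cast (h1.trans rfl).symm (h0 (Quot.mk Rel i))
  have hKdim : Module.finrank F K ≤ Fintype.card (Quot Rel) := by
    let ψ : (Fin m → F) →ₗ[F] (Quot Rel → F) := LinearMap.funLeft F F Quot.out
    have hinj : Function.Injective (ψ.domRestrict K) := by
      rw [← LinearMap.ker_eq_bot, LinearMap.ker_eq_bot']
      rintro ⟨x, hx⟩ hzero
      have h0 : ∀ q : Quot Rel, x q.out = 0 := by
        intro q
        simpa [ψ, LinearMap.domRestrict_apply, LinearMap.funLeft_apply] using
          congrFun hzero q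
      exact Subtype.ext (hker x hx h0)
    calc Module.finrank F K ≤ Module.finrank F (Quot Rel → F) :=
          LinearMap.finrank_le_finrank_of_injective hinj
      _ = Fintype.card (Quot Rel) := Module.finrank_fintype_fun_eq_card F
  have hrn : H.rank + Module.finrank F K = m := by
    have h1 := LinearMap.finrank_range_add_finrank_ker ((Matrix.transpose H).mulVecLin)
    rw [Module.finrank_fintype_fun_eq_card, Fintype.card_fin] at h1
    rw [← Matrix.rank_transpose (R:=F) H]
    exact h1
  have hfinal : (r + 1) * Module.finrank F K ≤ H.rank := by
    have h3 : (r + 2) * Module.finrank F K ≤ H.rank + Module.finrank F K := by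
      rw [hrn]
      exact le_trans (Nat.mul_le_mul_left _ hKdim) hQcard
    have h4 : (r + 1) * Module.finrank F K + Module.finrank F K
        = (r + 2) * Module.finrank F K := by ring
    linarith
  have hdc := myDoubleCount H h
  calc 2 * n = (r + 1) * m := by rw [← hdc]; ring
    _ = (r + 1) * (H.rank + Module.finrank F K) := by rw [hrn]
    _ = (r + 1) * H.rank + (r + 1) * Module.finrank F K := by ring
    _ ≤ (r + 1) * H.rank + H.rank := Nat.add_le_add_left hfinal _
    _ = (r + 2) * H.rank := by ring

/-- For every `r ≥ 1`, the supremum of rates of strict availability codes with locality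
`r` and availability `t = 2` satisfies `R(r,2) ≤ r/(r+2)`. -/
theorem stmt4 (r : ℕ) (hr : 1 ≤ r) :
    supRate r 2 ≤ (r : ℝ) / (r + 2) := by
  apply Real.sSup_le
  · rintro x ⟨F, _, _, _, n, m, H, hn, hpcm, rfl⟩
    have h1 : 2 * n ≤ (r + 2) * H.rank := myRankBound H hpcm
    have key : (n - H.rank) * (r + 2) ≤ r * n := by
      rw [Nat.sub_mul, tsub_le_iff_right]
      calc n * (r + 2) = r * n + 2 * n := by ring
        _ ≤ r * n + (r + 2) * H.rank := Nat.add_le_add_left h1 _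
        _ = r * n + H.rank * (r + 2) := by ring
    rw [div_le_div_iff₀ (by exact_mod_cast hn) (by positivity)]
    have h3 := (Nat.cast_le (α := ℝ)).2 key
    push_cast at h3
    linarith
  · positivity
end

section
/- Let H be an m×n binary matrix with all rows of weight r+1, all columns of weight t ≥ 2, and any two distinct row supports intersecting in at most one coordinate, with r > 2. Then the number of distinct vectors of Hamming weight exactly 2r obtained as sums of two distinct rows of H is at least n·t(t−1)/2. -/
/-!
Put `A i` for the support of row `i`. A column `j` lies in exactly `t` supports, which gives
`t (t - 1)` ordered pairs of distinct rows meeting at `j`, hence `n t (t - 1)` such flags in all.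
Two supports meeting in `{j}` have symmetric difference of size `2r`, and this symmetric
difference is the support of the sum of the two rows. It determines the pair up to order:
if `A a ∆ A b = A c ∆ A d` with `a ∉ {c, d}`, the `r` points of `A a \ {j}` would all lie in
`A c ∪ A d`, yet `A a` meets each of `A c`, `A d` in at most one point, and `r > 2`.
So at most two flags give the same vector.
-/

open Finset
open scoped symmDiff

lemma ZMod.two_add_ne_zero_iff (x y : ZMod 2) :
    x + y ≠ 0 ↔ x ≠ 0 ∧ ¬y ≠ 0 ∨ y ≠ 0 ∧ ¬x ≠ 0 := by
  revert x y; decide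

lemma Finset.filter_add_ne_zero_eq_symmDiff {α : Type*} [Fintype α] [DecidableEq α]
    (v w : α → ZMod 2) :
    ({j | v j + w j ≠ 0} : Finset α) =
      ({j | v j ≠ 0} : Finset α) ∆ ({j | w j ≠ 0} : Finset α) := by
  ext j
  simp only [mem_filter, mem_univ, true_and, mem_symmDiff, ZMod.two_add_ne_zero_iff]

namespace Finset

variable {α : Type*} [DecidableEq α]

lemma card_symmDiff_add_two_mul_card_inter (s u : Finset α) :
    #(s ∆ u) + 2 * #(s ∩ u) = #s + #u := by
  rw [symmDiff_def, sup_eq_union, card_union_of_disjoint disjoint_sdiff_sdiff]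
  have hs := card_sdiff_add_card_inter s u
  have hu := card_sdiff_add_card_inter u s
  rw [inter_comm] at hu
  omega

lemma inter_eq_singleton_of_card_inter_le_one {s u : Finset α} {j : α} (hs : j ∈ s) (hu : j ∈ u)
    (h : #(s ∩ u) ≤ 1) : s ∩ u = {j} :=
  eq_singleton_iff_unique_mem.mpr
    ⟨mem_inter.mpr ⟨hs, hu⟩, fun _ hx => card_le_one.mp h _ hx _ (mem_inter.mpr ⟨hs, hu⟩)⟩

end Finset

section LinearFamily

variable {ι α : Type*} [DecidableEq α] {A : ι → Finset α} {r : ℕ}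

lemma eq_or_eq_of_symmDiff_eq (hcard : ∀ i, #(A i) = r + 1)
    (hinter : ∀ i i', i ≠ i' → #(A i ∩ A i') ≤ 1) (hr : 2 < r) {a b c d : ι} {j : α}
    (hj : A a ∩ A b = {j}) (h : A a ∆ A b = A c ∆ A d) : a = c ∨ a = d := by
  by_contra! hne
  have hsub : A a \ {j} ⊆ A a ∩ A c ∪ A a ∩ A d := by
    intro x hx
    obtain ⟨hxa, hxj⟩ := mem_sdiff.mp hx
    have hxb : x ∉ A b := fun hxb => hxj (hj ▸ mem_inter.mpr ⟨hxa, hxb⟩)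
    have hxcd : x ∈ A c ∆ A d := h ▸ mem_symmDiff.mpr (Or.inl ⟨hxa, hxb⟩)
    rcases mem_symmDiff.mp hxcd with ⟨hxc, -⟩ | ⟨hxd, -⟩
    · exact mem_union_left _ (mem_inter.mpr ⟨hxa, hxc⟩)
    · exact mem_union_right _ (mem_inter.mpr ⟨hxa, hxd⟩)
  have hja : {j} ⊆ A a := hj ▸ inter_subset_left
  have hcard_sdiff : #(A a \ {j}) = r := by
    rw [card_sdiff_of_subset hja, hcard a, card_singleton, Nat.add_sub_cancel]
  have := (card_le_card hsub).trans (card_union_le _ _)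
  have := hinter a c hne.1
  have := hinter a d hne.2
  omega

lemma eq_and_eq_or_eq_and_eq_of_symmDiff_eq (hcard : ∀ i, #(A i) = r + 1)
    (hinter : ∀ i i', i ≠ i' → #(A i ∩ A i') ≤ 1) (hr : 2 < r) {a b c d : ι} {j : α}
    (hab : a ≠ b) (hj : A a ∩ A b = {j}) (h : A a ∆ A b = A c ∆ A d) :
    a = c ∧ b = d ∨ a = d ∧ b = c := by
  have ha := eq_or_eq_of_symmDiff_eq hcard hinter hr hj h
  have hb : b = c ∨ b = d := eq_or_eq_of_symmDiff_eq hcard hinter hr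
    (by rwa [inter_comm]) (by rwa [symmDiff_comm])
  rcases ha with rfl | rfl
  · exact Or.inl ⟨rfl, hb.resolve_left hab.symm⟩
  · exact Or.inr ⟨rfl, hb.resolve_right hab.symm⟩

variable [Fintype α] [Fintype ι]

variable (A) in
def flags : Finset (Σ _ : α, ι × ι) :=
  univ.sigma fun j => ({i | j ∈ A i} : Finset ι).offDiag

lemma mem_flags {q : Σ _ : α, ι × ι} :
    q ∈ flags A ↔ q.1 ∈ A q.2.1 ∧ q.1 ∈ A q.2.2 ∧ q.2.1 ≠ q.2.2 := by
  simp [flags]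

lemma card_flags {t : ℕ} (hdeg : ∀ j, #({i | j ∈ A i} : Finset ι) = t) :
    #(flags A) = Fintype.card α * (t * (t - 1)) := by
  simp only [flags, card_sigma, offDiag_card, hdeg, sum_const, card_univ, smul_eq_mul,
    Nat.mul_sub_one]

lemma card_flags_le_two_mul_card_image_symmDiff [DecidableEq ι] (hcard : ∀ i, #(A i) = r + 1)
    (hinter : ∀ i i', i ≠ i' → #(A i ∩ A i') ≤ 1) (hr : 2 < r) :
    #(flags A) ≤ 2 * #((flags A).image fun q => A q.2.1 ∆ A q.2.2) := by
  refine card_le_mul_card_image _ 2 fun s hs => ?_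
  obtain ⟨⟨j, a, b⟩, hq, rfl⟩ := mem_image.mp hs
  refine (card_le_card fun ⟨j', c, d⟩ hfiber => ?_).trans
    (card_le_two (a := (⟨j, a, b⟩ : Σ _ : α, ι × ι)) (b := ⟨j, b, a⟩))
  obtain ⟨hq', hsymm⟩ := mem_filter.mp hfiber
  obtain ⟨hja, hjb, hab⟩ := mem_flags.mp hq
  obtain ⟨hjc, hjd, -⟩ := mem_flags.mp hq'
  have hj := inter_eq_singleton_of_card_inter_le_one hja hjb (hinter a b hab)
  rcases eq_and_eq_or_eq_and_eq_of_symmDiff_eq hcard hinter hr hab hj hsymm.symm with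
    ⟨rfl, rfl⟩ | ⟨rfl, rfl⟩
  · obtain rfl : j' = j := by simpa [hj] using mem_inter.mpr ⟨hjc, hjd⟩
    simp
  · obtain rfl : j' = j := by simpa [hj] using mem_inter.mpr ⟨hjd, hjc⟩
    simp

lemma card_symmDiff_of_mem_flags (hcard : ∀ i, #(A i) = r + 1)
    (hinter : ∀ i i', i ≠ i' → #(A i ∩ A i') ≤ 1) {q : Σ _ : α, ι × ι} (hq : q ∈ flags A) :
    #(A q.2.1 ∆ A q.2.2) = 2 * r := by
  obtain ⟨hja, hjb, hab⟩ := mem_flags.mp hq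
  have := card_symmDiff_add_two_mul_card_inter (A q.2.1) (A q.2.2)
  rw [inter_eq_singleton_of_card_inter_le_one hja hjb (hinter _ _ hab), card_singleton,
    hcard, hcard] at this
  omega

end LinearFamily

theorem stmt6_general (m n r t : ℕ) (hr : 2 < r)
    (H : Matrix (Fin m) (Fin n) (ZMod 2))
    (hrow : ∀ i : Fin m, (univ.filter (fun j => H i j ≠ 0)).card = r + 1)
    (hcol : ∀ j : Fin n, (univ.filter (fun i => H i j ≠ 0)).card = t)
    (hint : ∀ i₁ i₂ : Fin m, i₁ ≠ i₂ →
      (univ.filter (fun j => H i₁ j ≠ 0 ∧ H i₂ j ≠ 0)).card ≤ 1) :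
    n * (t * (t - 1)) ≤ 2 *
      (((((univ : Finset (Fin m × Fin m)).filter (fun p => p.1 ≠ p.2)).image
          (fun p => fun j => H p.1 j + H p.2 j)).filter
        (fun v => (univ.filter (fun j => v j ≠ 0)).card = 2 * r)).card) := by
  set A : Fin m → Finset (Fin n) := fun i => {j | H i j ≠ 0}
  have hinter : ∀ i i', i ≠ i' → #(A i ∩ A i') ≤ 1 := fun i i' h => by
    simpa only [A, ← filter_and] using hint i i' h
  have hdeg : ∀ j, #({i | j ∈ A i} : Finset (Fin m)) = t := fun j => by
    simpa only [A, mem_filter, mem_univ, true_and] using hcol j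
  set S : Finset (Fin n → ZMod 2) :=
    {v ∈ ({p | p.1 ≠ p.2} : Finset (Fin m × Fin m)).image (fun p j => H p.1 j + H p.2 j) |
      #{j | v j ≠ 0} = 2 * r}
  have himage : (flags A).image (fun q => A q.2.1 ∆ A q.2.2) ⊆
      S.image fun v => ({j | v j ≠ 0} : Finset (Fin n)) := by
    intro s hs
    obtain ⟨q, hq, rfl⟩ := mem_image.mp hs
    have hsupp := filter_add_ne_zero_eq_symmDiff (H q.2.1) (H q.2.2)
    refine mem_image.mpr ⟨fun j => H q.2.1 j + H q.2.2 j, mem_filter.mpr ⟨?_, ?_⟩, hsupp⟩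
    · exact mem_image.mpr ⟨(q.2.1, q.2.2), by simpa using (mem_flags.mp hq).2.2, rfl⟩
    · rw [hsupp]; exact card_symmDiff_of_mem_flags hrow hinter hq
  calc n * (t * (t - 1)) = #(flags A) := by rw [card_flags hdeg, Fintype.card_fin]
    _ ≤ 2 * #((flags A).image fun q => A q.2.1 ∆ A q.2.2) :=
      card_flags_le_two_mul_card_image_symmDiff hrow hinter hr
    _ ≤ 2 * #S := Nat.mul_le_mul_left 2 ((card_le_card himage).trans card_image_le)

/-- Let `H` be an `m × n` binary matrix with all rows of weight `r+1`, all columns of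
weight `t ≥ 2`, any two distinct row supports intersecting in at most one coordinate, and
`r > 2`. Then the number of distinct vectors of Hamming weight exactly `2r` obtained as
sums of two distinct rows of `H` is at least `n·t(t-1)/2`. -/
theorem stmt6 (m n r t : ℕ) (hr : 2 < r) (ht : 2 ≤ t)
    (H : Matrix (Fin m) (Fin n) (ZMod 2))
    (hrow : ∀ i : Fin m, (univ.filter (fun j => H i j ≠ 0)).card = r + 1)
    (hcol : ∀ j : Fin n, (univ.filter (fun i => H i j ≠ 0)).card = t)
    (hint : ∀ i₁ i₂ : Fin m, i₁ ≠ i₂ →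
      (univ.filter (fun j => H i₁ j ≠ 0 ∧ H i₂ j ≠ 0)).card ≤ 1) :
    n * (t * (t - 1)) ≤ 2 *
      (((((univ : Finset (Fin m × Fin m)).filter (fun p => p.1 ≠ p.2)).image
          (fun p => fun j => H p.1 j + H p.2 j)).filter
        (fun v => (univ.filter (fun j => v j ≠ 0)).card = 2 * r)).card) :=
  stmt6_general m n r t hr H hrow hcol hint
end

section
/- Let C be a linear [n,k] code over F_q with locality r and availability t, and let d_i^⊥ denote the i-th generalized Hamming weight of the dual code C^⊥. Fix i with 1 ≤ i ≤ n−k and e ≥ d_i^⊥ such that e − i < k. Then there exists a linear code C' of length n − e, dimension at least k + i − e, minimum distance at least d_min(C), which also has locality r and availability t. -/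
open Finset

/-- The Hamming weight of a vector. -/
def wt {F : Type} [Zero F] [DecidableEq F] {ι : Type} [Fintype ι] (v : ι → F) : ℕ :=
  (univ.filter (fun j => v j ≠ 0)).card

/-- The standard dot product with `c`, as a linear map. -/
noncomputable def dotL {F : Type} [Field F] {ι : Type} [Fintype ι] (c : ι → F) :
    (ι → F) →ₗ[F] F :=
  ∑ j, c j • (LinearMap.proj j : (ι → F) →ₗ[F] F)

/-- The dual code of a linear code `C`: all vectors orthogonal (for the standard dot
product) to every codeword of `C`. -/
noncomputable def dualCode {F : Type} [Field F] {ι : Type} [Fintype ι]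
    (C : Submodule F (ι → F)) : Submodule F (ι → F) :=
  ⨅ c ∈ C, LinearMap.ker (dotL c)

/-- `C` has locality `r` and availability `t`: for each coordinate `j` there are `t`
dual codewords of weight at most `r+1`, each containing `j` in its support, whose
supports pairwise intersect exactly in `{j}`. -/
def HasAvailability {F : Type} [Field F] [DecidableEq F] {ι : Type} [Fintype ι]
    (C : Submodule F (ι → F)) (r t : ℕ) : Prop :=
  ∀ j : ι, ∃ h : Fin t → (ι → F),
    (∀ a, h a ∈ dualCode C) ∧ (∀ a, wt (h a) ≤ r + 1) ∧ (∀ a, h a j ≠ 0) ∧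
    (∀ a b, a ≠ b → {l | h a l ≠ 0} ∩ {l | h b l ≠ 0} = {j})

/-- The minimum distance (minimum weight of a nonzero codeword) of a linear code. -/
noncomputable def dmin {F : Type} [Field F] [DecidableEq F] {ι : Type} [Fintype ι]
    (C : Submodule F (ι → F)) : ℕ :=
  sInf {w | ∃ c ∈ C, c ≠ 0 ∧ wt c = w}

/-- The `i`-th generalized Hamming weight of a code `C`: the minimum support size of an
`i`-dimensional subspace of `C`. -/
noncomputable def ghw {F : Type} [Field F] {ι : Type} [Fintype ι]
    (C : Submodule F (ι → F)) (i : ℕ) : ℕ :=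
  sInf {w | ∃ D : Submodule F (ι → F), D ≤ C ∧ Module.finrank F D = i ∧
    Nat.card {j : ι | ∃ v ∈ D, v j ≠ 0} = w}

/-! Pick an `i`-dimensional subspace `D` of `C^⊥` whose support has `d_i^⊥ ≤ e` elements and
shorten `C` on `e` coordinates containing it. Restricting repair vectors of `C` to the surviving
coordinates gives repair vectors of the shortened code, and shortening preserves weights, so
locality, availability and minimum distance are inherited. For the dimension, let `Z` be the
words vanishing on the removed coordinates: `D` is orthogonal to both `C` and `Z`, so
`dim (C + Z) ≤ n - i`, whence `dim (C ∩ Z) = k + (n - e) - dim (C + Z) ≥ k + i - e`. -/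

open Module Function

section Codes

variable {F : Type} [Field F] {ι : Type} [Fintype ι]

lemma mem_dualCode {C : Submodule F (ι → F)} {v : ι → F} :
    v ∈ dualCode C ↔ ∀ c ∈ C, c ⬝ᵥ v = 0 := by
  simp [dualCode, dotL, dotProduct]

lemma dualCode_eq_comap_dualAnnihilator [DecidableEq ι] (C : Submodule F (ι → F)) :
    dualCode C = C.dualAnnihilator.comap (dotProductEquiv F ι).toLinearMap := by
  ext v
  simp [mem_dualCode, Submodule.mem_dualAnnihilator, dotProduct_comm]

lemma finrank_add_finrank_dualCode (C : Submodule F (ι → F)) :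
    finrank F C + finrank F (dualCode C) = Fintype.card ι := by
  classical
  rw [dualCode_eq_comap_dualAnnihilator, Submodule.comap_equiv_eq_map_symm,
    LinearEquiv.finrank_map_eq, Subspace.finrank_add_finrank_dualAnnihilator_eq,
    finrank_fintype_fun_eq_card]

lemma dualCode_sup (C Z : Submodule F (ι → F)) :
    dualCode (C ⊔ Z) = dualCode C ⊓ dualCode Z := by
  classical
  simp only [dualCode_eq_comap_dualAnnihilator, Submodule.dualAnnihilator_sup_eq,
    Submodule.comap_inf]

lemma finrank_add_finrank_le_of_le_dualCode_sup {C Z D : Submodule F (ι → F)}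
    (hD : D ≤ dualCode (C ⊔ Z)) :
    finrank F C + finrank F Z + finrank F D ≤ Fintype.card ι + finrank F ↥(C ⊓ Z) := by
  have := Submodule.finrank_sup_add_finrank_inf_eq C Z
  have := finrank_add_finrank_dualCode (C ⊔ Z)
  have := Submodule.finrank_mono hD
  omega

variable [DecidableEq F]

lemma dmin_le_wt {D : Submodule F (ι → F)} {c : ι → F} (hc : c ∈ D) (hc0 : c ≠ 0) :
    dmin D ≤ wt c :=
  Nat.sInf_le ⟨c, hc, hc0, rfl⟩

lemma exists_wt_eq_dmin {D : Submodule F (ι → F)} (hD : D ≠ ⊥) :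
    ∃ c ∈ D, c ≠ 0 ∧ wt c = dmin D := by
  obtain ⟨c, hc, hc0⟩ := (Submodule.ne_bot_iff D).mp hD
  exact Nat.sInf_mem (s := {w | ∃ c ∈ D, c ≠ 0 ∧ wt c = w}) ⟨wt c, c, hc, hc0, rfl⟩

end Codes

section Shortening

variable {F : Type} [Field F] {ι κ : Type} [Fintype ι] [Fintype κ]

/-- Shortening on the complement of `range f`: the codewords of `C` vanishing outside
`range f`, read through `f`. -/
noncomputable def shorten (C : Submodule F (ι → F)) (f : κ → ι) : Submodule F (κ → F) :=
  C.comap (ExtendByZero.linearMap F f)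

variable {C : Submodule F (ι → F)} {f : κ → ι}

lemma extend_dotProduct (hf : Injective f) (v : κ → F) (w : ι → F) :
    extend f v 0 ⬝ᵥ w = v ⬝ᵥ (w ∘ f) := by
  symm
  refine Fintype.sum_of_injective f hf _ _ (fun j hj => ?_) (fun a => ?_)
  · simp [extend_apply' _ _ _ (by simpa using hj)]
  · simp [hf.extend_apply]

lemma comp_mem_dualCode_shorten (hf : Injective f) {w : ι → F} (hw : w ∈ dualCode C) :
    w ∘ f ∈ dualCode (shorten C f) := by
  rw [mem_dualCode] at hw ⊢
  intro v hv
  rw [← extend_dotProduct hf]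
  exact hw _ hv

lemma mem_dualCode_range_extendByZero (hf : Injective f) {w : ι → F} (hw : ∀ a, w (f a) = 0) :
    w ∈ dualCode (LinearMap.range (ExtendByZero.linearMap F f)) := by
  rw [mem_dualCode]
  rintro _ ⟨v, rfl⟩
  change extend f v 0 ⬝ᵥ w = 0
  rw [extend_dotProduct hf]
  simp [dotProduct, hw]

variable [DecidableEq F]

lemma wt_comp_le (hf : Injective f) (w : ι → F) : wt (w ∘ f) ≤ wt w :=
  card_le_card_of_injOn f (fun a ha => by simpa using ha) hf.injOn

lemma wt_extend (hf : Injective f) (v : κ → F) : wt (extend f v 0) = wt v := by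
  simp only [wt, card_filter]
  symm
  refine Fintype.sum_of_injective f hf _ _ (fun j hj => ?_) (fun a => ?_)
  · simp [extend_apply' _ _ _ (by simpa using hj)]
  · simp [hf.extend_apply]

lemma HasAvailability.shorten {r t : ℕ} (hf : Injective f) (hav : HasAvailability C r t) :
    HasAvailability (shorten C f) r t := by
  intro a
  obtain ⟨h, hdual, hwt, hne, hinter⟩ := hav (f a)
  refine ⟨fun b => h b ∘ f, fun b => comp_mem_dualCode_shorten hf (hdual b),
    fun b => (wt_comp_le hf _).trans (hwt b), hne, fun b b' hbb' => ?_⟩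
  ext l
  simpa [hf.eq_iff] using Set.ext_iff.mp (hinter b b' hbb') (f l)

lemma dmin_le_dmin_shorten (hf : Injective f) (hC' : shorten C f ≠ ⊥) :
    dmin C ≤ dmin (shorten C f) := by
  obtain ⟨v, hv, hv0, hwt⟩ := exists_wt_eq_dmin hC'
  have hext0 : extend f v 0 ≠ 0 := fun h =>
    hv0 (extend_injective hf 0 (h.trans (map_zero (ExtendByZero.linearMap F f)).symm))
  rw [← hwt, ← wt_extend hf]
  exact dmin_le_wt hv hext0

end Shortening

lemma finrank_shorten {F ι κ : Type} [Field F] {C : Submodule F (ι → F)} {f : κ → ι}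
    (hf : Injective f) :
    finrank F (shorten C f) =
      finrank F ↥(C ⊓ LinearMap.range (ExtendByZero.linearMap F f)) := by
  rw [inf_comm, ← Submodule.map_comap_eq, shorten]
  exact (Submodule.equivMapOfInjective _ (extend_injective hf 0) _).finrank_eq

lemma finrank_range_extendByZero {F ι κ : Type} [Field F] [Fintype κ] {f : κ → ι}
    (hf : Injective f) :
    finrank F (LinearMap.range (ExtendByZero.linearMap F f)) = Fintype.card κ := by
  rw [LinearMap.finrank_range_of_inj (extend_injective hf 0), finrank_fintype_fun_eq_card]

lemma finrank_add_le_finrank_shorten {F ι κ : Type} [Field F] [Fintype ι] [Fintype κ]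
    {C D : Submodule F (ι → F)} {f : κ → ι} (hf : Injective f)
    (hDC : D ≤ dualCode C) (hDf : ∀ v ∈ D, ∀ a, v (f a) = 0) :
    finrank F C + Fintype.card κ + finrank F D ≤ Fintype.card ι + finrank F (shorten C f) := by
  rw [finrank_shorten hf, ← finrank_range_extendByZero (F := F) hf]
  refine finrank_add_finrank_le_of_le_dualCode_sup ?_
  rw [dualCode_sup]
  exact le_inf hDC fun v hv => mem_dualCode_range_extendByZero hf (hDf v hv)

lemma Submodule.exists_le_finrank_eq {K M : Type*} [DivisionRing K] [AddCommGroup M]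
    [Module K M] [FiniteDimensional K M] (P : Submodule K M) {i : ℕ} (hi : i ≤ finrank K P) :
    ∃ D ≤ P, finrank K D = i := by
  obtain ⟨v, hv⟩ := exists_linearIndependent_of_le_finrank hi
  refine ⟨Submodule.span K (Set.range (P.subtype ∘ v)), ?_, ?_⟩
  · rw [Submodule.span_le]
    rintro _ ⟨a, rfl⟩
    exact (v a).2
  · rw [finrank_span_eq_card (hv.map' P.subtype P.ker_subtype), Fintype.card_fin]

lemma exists_card_support_eq_ghw {F ι : Type} [Field F] [Fintype ι] {P : Submodule F (ι → F)}
    {i : ℕ} (hi : i ≤ finrank F P) :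
    ∃ D ≤ P, finrank F D = i ∧ Nat.card {j : ι | ∃ v ∈ D, v j ≠ 0} = ghw P i := by
  obtain ⟨D, hDP, hD⟩ := P.exists_le_finrank_eq hi
  exact Nat.sInf_mem (s := {w | ∃ D : Submodule F (ι → F), D ≤ P ∧ finrank F D = i ∧
    Nat.card {j : ι | ∃ v ∈ D, v j ≠ 0} = w}) ⟨_, D, hDP, hD, rfl⟩

lemma exists_injective_fin_avoiding {ι : Type} [Fintype ι] (s : Set ι) {m : ℕ}
    (hm : m + Nat.card s ≤ Fintype.card ι) :
    ∃ f : Fin m → ι, Injective f ∧ ∀ a, f a ∉ s := by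
  classical
  obtain ⟨g⟩ : Nonempty (Fin m ↪ ↥sᶜ) := by
    apply Function.Embedding.nonempty_of_card_le
    rw [Fintype.card_fin, Fintype.card_compl_set, ← Nat.card_eq_fintype_card (α := s)]
    omega
  exact ⟨fun a => g a, Subtype.val_injective.comp g.injective, fun a => (g a).2⟩

theorem stmt8_general {F : Type} [Field F] [DecidableEq F]
    (n r t i e : ℕ) (C : Submodule F (Fin n → F))
    (hav : HasAvailability C r t)
    (hi2 : i ≤ n - Module.finrank F C)
    (he : ghw (dualCode C) i ≤ e)
    (hek : e < Module.finrank F C + i) :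
    ∃ C' : Submodule F (Fin (n - e) → F),
      HasAvailability C' r t ∧
      (Module.finrank F C : ℤ) + i - e ≤ Module.finrank F C' ∧
      dmin C ≤ dmin C' := by
  have hdual := finrank_add_finrank_dualCode C
  rw [Fintype.card_fin] at hdual
  obtain ⟨D, hDC, hDi, hDsupp⟩ :=
    exists_card_support_eq_ghw (P := dualCode C) (hi2.trans (by omega))
  obtain ⟨f, hf, hfD⟩ := exists_injective_fin_avoiding {j | ∃ v ∈ D, v j ≠ 0} (m := n - e)
    (by rw [Fintype.card_fin]; omega)
  have hDf : ∀ v ∈ D, ∀ a, v (f a) = 0 := fun v hv a => by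
    by_contra h
    exact hfD a ⟨v, hv, h⟩
  have hdim := finrank_add_le_finrank_shorten hf hDC hDf
  rw [Fintype.card_fin, Fintype.card_fin] at hdim
  have hC' : shorten C f ≠ ⊥ := by
    intro h
    rw [h, finrank_bot] at hdim
    omega
  exact ⟨shorten C f, hav.shorten hf, by omega, dmin_le_dmin_shorten hf hC'⟩

/-- Shortening bound: if `C` is an `[n,k]` code over `F_q` with locality `r` and
availability `t`, `d_i^⊥` is the `i`-th generalized Hamming weight of `C^⊥`,
`1 ≤ i ≤ n - k`, `e ≥ d_i^⊥`, and `e - i < k`, then there exists a linear code `C'` of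
length `n - e`, dimension at least `k + i - e`, minimum distance at least `d_min(C)`,
with locality `r` and availability `t`. -/
theorem stmt8 {F : Type} [Field F] [Fintype F] [DecidableEq F]
    (n r t i e : ℕ) (C : Submodule F (Fin n → F))
    (hav : HasAvailability C r t)
    (hi1 : 1 ≤ i) (hi2 : i ≤ n - Module.finrank F C)
    (he : ghw (dualCode C) i ≤ e)
    (hek : e < Module.finrank F C + i) :
    ∃ C' : Submodule F (Fin (n - e) → F),
      HasAvailability C' r t ∧
      (Module.finrank F C : ℤ) + i - e ≤ Module.finrank F C' ∧
      dmin C ≤ dmin C' :=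
  stmt8_general n r t i e C hav hi2 he hek
end

section
/- Let C be a linear code over F_q with locality r ≥ 2 and availability t ≥ 2. Then the i-th generalized Hamming weight of the dual code satisfies d_i^⊥ ≤ i·r + 1 for all i for which d_i^⊥ is defined. -/
open Finset

section Aux

variable {F : Type} [Field F] [DecidableEq F] {n : ℕ}

/-- The support of a vector, as a `Finset`. -/
def fsupp (v : Fin n → F) : Finset (Fin n) := Finset.univ.filter (fun j => v j ≠ 0)

lemma mem_fsupp {v : Fin n → F} {j : Fin n} : j ∈ fsupp v ↔ v j ≠ 0 := by
  simp [fsupp]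

lemma fsupp_comb {w x : Fin n → F} {a : F} :
    fsupp (w + a • x) ⊆ fsupp w ∪ fsupp x := by
  intro l hl
  rw [mem_fsupp] at hl
  rw [Finset.mem_union, mem_fsupp, mem_fsupp]
  by_contra h
  push_neg at h
  apply hl
  simp [h.1, h.2]

/-- A "low-weight" dual codeword. -/
def Low (C : Submodule F (Fin n → F)) (r : ℕ) (x : Fin n → F) : Prop :=
  x ∈ dualCode C ∧ (fsupp x).card ≤ r + 1

/-- span of the low-weight dual codewords. -/
noncomputable def Vlow (C : Submodule F (Fin n → F)) (r : ℕ) : Submodule F (Fin n → F) :=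
  Submodule.span F {x | Low C r x}

/-- Every coordinate has a pair of low-weight dual codewords whose supports meet
only in that coordinate. -/
def Pairing (C : Submodule F (Fin n → F)) (r : ℕ) : Prop :=
  ∀ l : Fin n, ∃ x y : Fin n → F, Low C r x ∧ Low C r y ∧ x l ≠ 0 ∧ y l ≠ 0 ∧
    fsupp x ∩ fsupp y ⊆ {l}

/-- The greedy invariant. -/
def GInv (C : Submodule F (Fin n → F)) (r : ℕ) (W : Submodule F (Fin n → F))
    (S : Finset (Fin n)) (m : ℕ) : Prop :=
  W ≤ Vlow C r ∧ Module.finrank F W = m ∧ (∀ x ∈ W, fsupp x ⊆ S) ∧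
  (S.card ≤ m * r ∨ (S.card ≤ m * r + 1 ∧ ∃ c R, c ∈ W ∧ R ⊆ fsupp c ∧ R.card = r ∧
    ∀ x ∈ W, ∃ α : F, ∀ ρ ∈ R, x ρ = α * c ρ))

lemma finrank_sup_span_singleton {W : Submodule F (Fin n → F)} {x : Fin n → F}
    (hx : x ∉ W) :
    Module.finrank F ↥(W ⊔ Submodule.span F {x}) = Module.finrank F ↥W + 1 := by
  have hx0 : x ≠ 0 := fun h => hx (h ▸ W.zero_mem)
  have hinf : W ⊓ Submodule.span F {x} = ⊥ := by
    rw [eq_bot_iff]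
    intro y hy
    rw [Submodule.mem_inf] at hy
    obtain ⟨hyW, hyx⟩ := hy
    rw [Submodule.mem_span_singleton] at hyx
    obtain ⟨a, rfl⟩ := hyx
    rcases eq_or_ne a 0 with rfl | ha
    · simp
    · exact absurd (by simpa [ha] using W.smul_mem a⁻¹ hyW) hx
  have := Submodule.finrank_sup_add_finrank_inf_eq W (Submodule.span F {x})
  rw [hinf] at this
  simp only [finrank_bot, add_zero] at this
  rw [this, finrank_span_singleton hx0]

/-- The stuck state cannot carry the "tight leaf" data. -/
lemma stuck_no_right {C : Submodule F (Fin n → F)} {r : ℕ} (hr : 2 ≤ r)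
    (hP : Pairing C r) {W : Submodule F (Fin n → F)} {S : Finset (Fin n)}
    (h3 : ∀ x ∈ W, fsupp x ⊆ S)
    (hstuck : ∀ x, Low C r x → (fsupp x ∩ S).Nonempty → x ∈ W)
    {c : Fin n → F} {R : Finset (Fin n)} (hcW : c ∈ W) (hRc : R ⊆ fsupp c)
    (hRcard : R.card = r)
    (hone : ∀ x ∈ W, ∃ α : F, ∀ ρ ∈ R, x ρ = α * c ρ) : False := by
  have hRne : R.Nonempty := by
    rw [← Finset.card_pos, hRcard]; omega
  obtain ⟨l, hl⟩ := hRne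
  obtain ⟨x, y, hxLow, hyLow, hxl, hyl, hxy⟩ := hP l
  have hlS : l ∈ S := h3 c hcW (hRc hl)
  have hxW : x ∈ W := hstuck x hxLow ⟨l, Finset.mem_inter.2 ⟨mem_fsupp.2 hxl, hlS⟩⟩
  have hyW : y ∈ W := hstuck y hyLow ⟨l, Finset.mem_inter.2 ⟨mem_fsupp.2 hyl, hlS⟩⟩
  -- x and y are both nonzero on all of R
  have key : ∀ z : Fin n → F, z ∈ W → z l ≠ 0 → R ⊆ fsupp z := by
    intro z hzW hzl
    obtain ⟨α, hα⟩ := hone z hzW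
    have hcl : c l ≠ 0 := mem_fsupp.1 (hRc hl)
    have hαne : α ≠ 0 := by
      intro h0
      apply hzl
      rw [hα l hl, h0, zero_mul]
    intro ρ hρ
    rw [mem_fsupp]
    rw [hα ρ hρ]
    exact mul_ne_zero hαne (mem_fsupp.1 (hRc hρ))
  have hRx : R ⊆ fsupp x := key x hxW hxl
  have hRy : R ⊆ fsupp y := key y hyW hyl
  have : R ⊆ {l} := fun ρ hρ => hxy (Finset.mem_inter.2 ⟨hRx hρ, hRy hρ⟩)
  have := Finset.card_le_card this
  rw [hRcard, Finset.card_singleton] at this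
  omega

/-- One greedy step. -/
lemma greedy_step {C : Submodule F (Fin n → F)} {r : ℕ} (hr : 2 ≤ r)
    (hP : Pairing C r) {W : Submodule F (Fin n → F)} {S : Finset (Fin n)} {m : ℕ}
    (hInv : GInv C r W S m) (hm : m < Module.finrank F (Vlow C r)) :
    ∃ W' S', GInv C r W' S' (m + 1) := by
  obtain ⟨h1, h2, h3, h5⟩ := hInv
  by_cases hstuck : ∀ x, Low C r x → (fsupp x ∩ S).Nonempty → x ∈ W
  · -- stuck case: the invariant must be in its left branch
    have hleft : S.card ≤ m * r := by
      rcases h5 with h | ⟨_, c, R, hcW, hRc, hRcard, hone⟩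
      · exact h
      · exact absurd (stuck_no_right hr hP h3 hstuck hcW hRc hRcard hone) (fun h => h)
    -- get a low word not in W
    have hex : ∃ y, Low C r y ∧ y ∉ W := by
      by_contra h
      push_neg at h
      have : Vlow C r ≤ W := Submodule.span_le.2 (fun y hy => h y hy)
      have := Submodule.finrank_mono this
      omega
    obtain ⟨y, hyLow, hyW⟩ := hex
    have hy0 : y ≠ 0 := fun h => hyW (h ▸ W.zero_mem)
    have hdisj : fsupp y ∩ S = ∅ := by
      by_contra h
      exact hyW (hstuck y hyLow (Finset.nonempty_of_ne_empty h))
    refine ⟨W ⊔ Submodule.span F {y}, S ∪ fsupp y, ?_, ?_, ?_, ?_⟩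
    · exact sup_le h1 ((Submodule.span_singleton_le_iff_mem y _).2
        (Submodule.subset_span hyLow))
    · rw [finrank_sup_span_singleton hyW, h2]
    · intro x hx
      rw [Submodule.mem_sup] at hx
      obtain ⟨w, hw, z, hz, rfl⟩ := hx
      rw [Submodule.mem_span_singleton] at hz
      obtain ⟨a, rfl⟩ := hz
      exact fsupp_comb.trans (Finset.union_subset_union (h3 w hw) (le_refl _))
    · -- cardinality invariant
      have hcard : (S ∪ fsupp y).card ≤ S.card + (fsupp y).card :=
        Finset.card_union_le _ _
      rcases Nat.lt_or_ge (fsupp y).card (r + 1) with hsmall | hbig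
      · left
        have : (S ∪ fsupp y).card ≤ m * r + r := by omega
        calc (S ∪ fsupp y).card ≤ m * r + r := this
        _ = (m + 1) * r := by ring
      · right
        have hycard : (fsupp y).card = r + 1 := le_antisymm hyLow.2 hbig
        constructor
        · have : (S ∪ fsupp y).card ≤ m * r + (r + 1) := by omega
          calc (S ∪ fsupp y).card ≤ m * r + (r + 1) := this
          _ = (m + 1) * r + 1 := by ring
        · -- leaf data: y minus one point of its support
          have hyne : (fsupp y).Nonempty := by
            rw [← Finset.card_pos, hycard]; omega
          obtain ⟨l₀, hl₀⟩ := hyne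
          refine ⟨y, (fsupp y).erase l₀, Submodule.mem_sup_right
            (Submodule.mem_span_singleton_self y), Finset.erase_subset _ _, ?_, ?_⟩
          · rw [Finset.card_erase_of_mem hl₀, hycard]; omega
          · intro x hx
            rw [Submodule.mem_sup] at hx
            obtain ⟨w, hw, z, hz, rfl⟩ := hx
            rw [Submodule.mem_span_singleton] at hz
            obtain ⟨a, rfl⟩ := hz
            refine ⟨a, fun ρ hρ => ?_⟩
            have hρy : ρ ∈ fsupp y := Finset.mem_of_mem_erase hρ
            have hρS : ρ ∉ S := by
              intro hρS
              have : ρ ∈ fsupp y ∩ S := Finset.mem_inter.2 ⟨hρy, hρS⟩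
              rw [hdisj] at this
              exact absurd this (Finset.notMem_empty ρ)
            have hwρ : w ρ = 0 := by
              by_contra h
              exact hρS (h3 w hw (mem_fsupp.2 h))
            simp [hwρ, mul_comm]
  · -- non-stuck: extend with a low word meeting S
    push_neg at hstuck
    obtain ⟨x, hxLow, hxS, hxW⟩ := hstuck
    have hx0 : x ≠ 0 := fun h => hxW (h ▸ W.zero_mem)
    -- new coordinates
    set P : Finset (Fin n) := fsupp x \ S with hP'
    have hplt : P.card < (fsupp x).card := by
      apply Finset.card_lt_card
      rw [Finset.ssubset_iff_of_subset (Finset.sdiff_subset)]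
      obtain ⟨l, hl⟩ := hxS
      rw [Finset.mem_inter] at hl
      exact ⟨l, hl.1, fun h => (Finset.mem_sdiff.1 h).2 hl.2⟩
    have hpr : P.card ≤ r := by
      have := hxLow.2
      omega
    have hScard : (S ∪ fsupp x).card ≤ S.card + P.card := by
      have : S ∪ fsupp x = S ∪ P := by
        ext l
        simp only [Finset.mem_union, hP', Finset.mem_sdiff]
        tauto
      rw [this]
      exact Finset.card_union_le _ _
    refine ⟨W ⊔ Submodule.span F {x}, S ∪ fsupp x, ?_, ?_, ?_, ?_⟩
    · exact sup_le h1 ((Submodule.span_singleton_le_iff_mem x _).2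
        (Submodule.subset_span hxLow))
    · rw [finrank_sup_span_singleton hxW, h2]
    · intro z hz
      rw [Submodule.mem_sup] at hz
      obtain ⟨w, hw, z', hz', rfl⟩ := hz
      rw [Submodule.mem_span_singleton] at hz'
      obtain ⟨a, rfl⟩ := hz'
      exact fsupp_comb.trans (Finset.union_subset_union (h3 w hw) (le_refl _))
    · rcases h5 with h | ⟨hS1, c, R, hcW, hRc, hRcard, hone⟩
      · left
        have : (S ∪ fsupp x).card ≤ m * r + r := by omega
        calc (S ∪ fsupp x).card ≤ m * r + r := this
        _ = (m + 1) * r := by ring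
      · rcases Nat.lt_or_ge P.card r with hsmall | hbig
        · left
          have : (S ∪ fsupp x).card ≤ m * r + 1 + (r - 1) := by omega
          have h2r : m * r + 1 + (r - 1) = (m + 1) * r := by
            have : 1 ≤ r := by omega
            have := Nat.succ_pred_eq_of_pos this
            nlinarith [Nat.sub_add_cancel (show 1 ≤ r by omega)]
          omega
        · have hPr : P.card = r := le_antisymm hpr hbig
          right
          constructor
          · have : (S ∪ fsupp x).card ≤ m * r + 1 + r := by omega
            calc (S ∪ fsupp x).card ≤ m * r + 1 + r := this
            _ = (m + 1) * r + 1 := by ring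
          · refine ⟨x, P, Submodule.mem_sup_right
              (Submodule.mem_span_singleton_self x), Finset.sdiff_subset, hPr, ?_⟩
            intro z hz
            rw [Submodule.mem_sup] at hz
            obtain ⟨w, hw, z', hz', rfl⟩ := hz
            rw [Submodule.mem_span_singleton] at hz'
            obtain ⟨a, rfl⟩ := hz'
            refine ⟨a, fun ρ hρ => ?_⟩
            have hρS : ρ ∉ S := (Finset.mem_sdiff.1 hρ).2
            have hwρ : w ρ = 0 := by
              by_contra h
              exact hρS (h3 w hw (mem_fsupp.2 h))
            simp [hwρ, mul_comm]

lemma exists_Inv {C : Submodule F (Fin n → F)} {r : ℕ} (hr : 2 ≤ r)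
    (hP : Pairing C r) :
    ∀ m, m ≤ Module.finrank F (Vlow C r) → ∃ W S, GInv C r W S m := by
  intro m
  induction m with
  | zero =>
    intro _
    refine ⟨⊥, ∅, bot_le, finrank_bot F _, ?_, Or.inl (by simp)⟩
    intro x hx
    rw [Submodule.mem_bot] at hx
    subst hx
    intro l hl
    rw [mem_fsupp] at hl
    simp at hl
  | succ m ih =>
    intro hm
    obtain ⟨W, S, hInv⟩ := ih (by omega)
    exact greedy_step hr hP hInv (by omega)

/-- All coordinates are covered by at most `finrank Vlow * r` coordinates. -/
lemma total_card {C : Submodule F (Fin n → F)} {r : ℕ} (hr : 2 ≤ r)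
    (hP : Pairing C r) :
    n ≤ Module.finrank F (Vlow C r) * r := by
  set k := Module.finrank F (Vlow C r) with hk
  obtain ⟨W, S, h1, h2, h3, h5⟩ := exists_Inv hr hP k le_rfl
  have hWV : W = Vlow C r := Submodule.eq_of_le_of_finrank_le h1 (by omega)
  have hstuck : ∀ x, Low C r x → (fsupp x ∩ S).Nonempty → x ∈ W := by
    intro x hx _
    rw [hWV]
    exact Submodule.subset_span hx
  have hleft : S.card ≤ k * r := by
    rcases h5 with h | ⟨_, c, R, hcW, hRc, hRcard, hone⟩
    · exact h
    · exact absurd (stuck_no_right hr hP h3 hstuck hcW hRc hRcard hone) (fun h => h)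
  have huniv : (Finset.univ : Finset (Fin n)) ⊆ S := by
    intro l _
    obtain ⟨x, y, hxLow, hyLow, hxl, hyl, hxy⟩ := hP l
    have hxW : x ∈ W := by rw [hWV]; exact Submodule.subset_span hxLow
    exact h3 x hxW (mem_fsupp.2 hxl)
  have := Finset.card_le_card huniv
  simp only [Finset.card_univ, Fintype.card_fin] at this
  omega

end Aux

/-- If `C` is a linear code over `F_q` with locality `r ≥ 2` and availability `t ≥ 2`,
then the `i`-th generalized Hamming weight of the dual code satisfies
`d_i^⊥ ≤ i·r + 1`, for every `i` with `1 ≤ i ≤ dim C^⊥` (i.e. whenever `d_i^⊥` is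
defined). -/
theorem stmt10 {F : Type} [Field F] [Fintype F] [DecidableEq F]
    (n r t i : ℕ) (hr : 2 ≤ r) (ht : 2 ≤ t)
    (C : Submodule F (Fin n → F))
    (hav : HasAvailability C r t)
    (hi1 : 1 ≤ i) (hi2 : i ≤ Module.finrank F (dualCode C)) :
    ghw (dualCode C) i ≤ i * r + 1 := by
  -- extract the pairing
  have hP : Pairing C r := by
    intro l
    obtain ⟨h, hmem, hwt, hnz, hint⟩ := hav l
    have hab : (⟨0, by omega⟩ : Fin t) ≠ ⟨1, by omega⟩ := by
      simp [Fin.ext_iff]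
    refine ⟨h ⟨0, by omega⟩, h ⟨1, by omega⟩, ⟨hmem _, hwt _⟩, ⟨hmem _, hwt _⟩,
      hnz _, hnz _, ?_⟩
    intro ρ hρ
    rw [Finset.mem_inter, mem_fsupp, mem_fsupp] at hρ
    have := hint _ _ hab
    have hρj : ρ ∈ ({l} : Set (Fin n)) := by
      rw [← this]
      exact ⟨hρ.1, hρ.2⟩
    simp only [Set.mem_singleton_iff] at hρj
    simp [hρj]
  have hVD : Vlow C r ≤ dualCode C := Submodule.span_le.2 (fun x hx => hx.1)
  set k := Module.finrank F (Vlow C r) with hk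
  rcases le_or_gt i k with hik | hik
  · -- use the greedy subspace
    obtain ⟨W, S, h1, h2, h3, h5⟩ := exists_Inv hr hP i hik
    have hScard : S.card ≤ i * r + 1 := by
      rcases h5 with h | ⟨h, _⟩ <;> omega
    have hsupp : {j : Fin n | ∃ v ∈ W, v j ≠ 0} ⊆ ↑S := by
      rintro j ⟨v, hv, hvj⟩
      exact h3 v hv (mem_fsupp.2 hvj)
    have hcard : Nat.card {j : Fin n | ∃ v ∈ W, v j ≠ 0} ≤ i * r + 1 := by
      rw [Nat.card_coe_set_eq]
      calc {j : Fin n | ∃ v ∈ W, v j ≠ 0}.ncard ≤ (↑S : Set (Fin n)).ncard :=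
        Set.ncard_le_ncard hsupp (Set.toFinite _)
      _ = S.card := Set.ncard_coe_finset S
      _ ≤ i * r + 1 := hScard
    have hmem : Nat.card {j : Fin n | ∃ v ∈ W, v j ≠ 0} ∈
        {w | ∃ D : Submodule F (Fin n → F), D ≤ dualCode C ∧ Module.finrank F D = i ∧
          Nat.card {j : Fin n | ∃ v ∈ D, v j ≠ 0} = w} := ⟨W, h1.trans hVD, h2, rfl⟩
    exact le_trans (Nat.sInf_le hmem) hcard
  · -- i > k: the whole space has few coordinates
    have hn : n ≤ k * r := total_card hr hP
    -- construct a subspace of dualCode C of dimension i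
    have : ∃ D : Submodule F (Fin n → F), D ≤ dualCode C ∧ Module.finrank F D = i := by
      classical
      have : FiniteDimensional F ↥(dualCode C) := inferInstance
      set d := Module.finrank F ↥(dualCode C) with hd
      let b := Module.finBasis F ↥(dualCode C)
      let f : Fin i → (Fin n → F) := fun a => ↑(b (Fin.castLE hi2 a))
      have hli : LinearIndependent F f := by
        have h1 : LinearIndependent F (fun a : Fin i => b (Fin.castLE hi2 a)) :=
          b.linearIndependent.comp _ (Fin.castLE_injective hi2)
        exact h1.map' (dualCode C).subtype (Submodule.ker_subtype _)
      refine ⟨Submodule.span F (Set.range f), ?_, ?_⟩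
      · rw [Submodule.span_le]
        rintro _ ⟨a, rfl⟩
        exact (b (Fin.castLE hi2 a)).2
      · rw [finrank_span_eq_card hli, Fintype.card_fin]
    obtain ⟨D, hD, hDrank⟩ := this
    have hcard : Nat.card {j : Fin n | ∃ v ∈ D, v j ≠ 0} ≤ i * r + 1 := by
      have h1 : Nat.card {j : Fin n | ∃ v ∈ D, v j ≠ 0} ≤ n := by
        rw [Nat.card_coe_set_eq]
        calc {j : Fin n | ∃ v ∈ D, v j ≠ 0}.ncard ≤ (Set.univ : Set (Fin n)).ncard :=
          Set.ncard_le_ncard (Set.subset_univ _) (Set.toFinite _)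
        _ = n := by rw [Set.ncard_univ, Nat.card_eq_fintype_card, Fintype.card_fin]
      have hki : k * r ≤ i * r := by
        have : k ≤ i := le_of_lt hik
        exact Nat.mul_le_mul_right r this
      exact h1.trans (hn.trans (hki.trans (Nat.le_succ _)))
    have hmem : Nat.card {j : Fin n | ∃ v ∈ D, v j ≠ 0} ∈
        {w | ∃ D' : Submodule F (Fin n → F), D' ≤ dualCode C ∧ Module.finrank F D' = i ∧
          Nat.card {j : Fin n | ∃ v ∈ D', v j ≠ 0} = w} := ⟨D, hD, hDrank, rfl⟩
    exact le_trans (Nat.sInf_le hmem) hcard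
end

section
/- Let T(n) denote the maximum number h of partitions P_1,…,P_h of {1,…,n} into blocks of size exactly r+1 such that any two blocks from different partitions intersect in at most one element, where n = (r+1)^g. Then T((r+1)^g) ≥ (f^g − 1)/(f − 1), where f = N(r+1) + 1 and N(r+1) is the maximum number of mutually orthogonal Latin squares of order r+1. -/
open Finset

/-- `P` is a partition of `Fin n` into blocks of size exactly `s`. -/
def IsPartitionInto {n : ℕ} (P : Finset (Finset (Fin n))) (s : ℕ) : Prop :=
  (∀ B ∈ P, B.card = s) ∧ ∀ x : Fin n, ∃! B, B ∈ P ∧ x ∈ B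

/-- `L` is a Latin square of order `q` (each row and each column is a bijection). -/
def IsLatinSquare (q : ℕ) (L : Fin q → Fin q → Fin q) : Prop :=
  (∀ a, Function.Bijective (L a)) ∧ (∀ b, Function.Bijective (fun a => L a b))

/-- Two Latin squares of order `q` are orthogonal. -/
def OrthLatin (q : ℕ) (L₁ L₂ : Fin q → Fin q → Fin q) : Prop :=
  Function.Injective (fun p : Fin q × Fin q => (L₁ p.1 p.2, L₂ p.1 p.2))

/-- `N(q)`: the maximum number of mutually orthogonal Latin squares of order `q`. -/
noncomputable def numMOLS (q : ℕ) : ℕ :=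
  sSup {s | ∃ L : Fin s → (Fin q → Fin q → Fin q),
    (∀ i, IsLatinSquare q (L i)) ∧ ∀ i j, i ≠ j → OrthLatin q (L i) (L j)}

/-- `T(n)`: the maximum number `h` of partitions `P_1, …, P_h` of `[n]` into blocks of
size exactly `r+1` such that any two blocks from different partitions intersect in at
most one element. -/
noncomputable def maxNearOrthPartitions (n r : ℕ) : ℕ :=
  sSup {h | ∃ P : Fin h → Finset (Finset (Fin n)),
    (∀ i, IsPartitionInto (P i) (r + 1)) ∧
    ∀ i j, i ≠ j → ∀ B ∈ P i, ∀ B' ∈ P j, (B ∩ B').card ≤ 1}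

open Function

/-!
A partition of `[n]` into `q`-blocks is the fibre partition of a labelling of `[n]`, and two
partitions are near-orthogonal exactly when the pair of their labellings is injective.

Take `f = N(q) + 1` arrays `M : [q] → [q] → [q]` with bijective rows that are pairwise
orthogonal: the `N(q)` mutually orthogonal Latin squares together with `(a, b) ↦ b`.
From `h` near-orthogonal partitions of `[n]` we get `f h + 1` near-orthogonal partitions of
`[n] × [q]`: the columns `{x} × [q]`, and for each partition `P` and array `M` the blocks
`{(x, y) | x ∈ B, M (index of x in B) y = c}` (`B ∈ P`, `c ∈ [q]`). Starting from the empty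
family on `[1]`, `g` steps give `∑_{i<g} f^i = (f^g - 1)/(f - 1)` partitions of `[q^g]`.
-/

def IsNearOrthFamily {ι : Type*} {n : ℕ} (P : ι → Finset (Finset (Fin n))) (s : ℕ) : Prop :=
  (∀ i, IsPartitionInto (P i) s) ∧
    ∀ i j, i ≠ j → ∀ B ∈ P i, ∀ B' ∈ P j, (B ∩ B').card ≤ 1

lemma IsNearOrthFamily.comp {ι κ : Type*} {n s : ℕ} {P : ι → Finset (Finset (Fin n))}
    (hP : IsNearOrthFamily P s) {e : κ → ι} (he : Injective e) :
    IsNearOrthFamily (P ∘ e) s :=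
  ⟨fun i => hP.1 (e i), fun _ _ hij => hP.2 _ _ (he.ne hij)⟩

section FiberPartition

variable {m s : ℕ} {K K' : Type*} [DecidableEq K] [DecidableEq K']

def fiberPartition (κ : Fin m → K) : Finset (Finset (Fin m)) :=
  univ.image fun a => ({b | κ b = κ a} : Finset (Fin m))

lemma mem_fiberPartition {κ : Fin m → K} {B : Finset (Fin m)} :
    B ∈ fiberPartition κ ↔ ∃ a, ({b | κ b = κ a} : Finset (Fin m)) = B := by
  simp [fiberPartition]

lemma isPartitionInto_fiberPartition {κ : Fin m → K} (hκ : ∀ a, #{b | κ b = κ a} = s) :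
    IsPartitionInto (fiberPartition κ) s := by
  refine ⟨fun B hB => ?_, fun x => ⟨({b | κ b = κ x} : Finset (Fin m)),
    ⟨mem_fiberPartition.2 ⟨x, rfl⟩, by simp⟩, ?_⟩⟩
  · obtain ⟨a, rfl⟩ := mem_fiberPartition.1 hB
    exact hκ a
  · rintro B ⟨hB, hxB⟩
    obtain ⟨a, rfl⟩ := mem_fiberPartition.1 hB
    simp only [mem_filter, mem_univ, true_and] at hxB
    simp [hxB]

lemma card_inter_le_one_of_mem_fiberPartition {κ : Fin m → K} {κ' : Fin m → K'}
    (h : Injective fun x => (κ x, κ' x)) {B B' : Finset (Fin m)}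
    (hB : B ∈ fiberPartition κ) (hB' : B' ∈ fiberPartition κ') : #(B ∩ B') ≤ 1 := by
  obtain ⟨a, rfl⟩ := mem_fiberPartition.1 hB
  obtain ⟨a', rfl⟩ := mem_fiberPartition.1 hB'
  refine card_le_one.2 fun x hx y hy => h ?_
  simp only [mem_inter, mem_filter, mem_univ, true_and] at hx hy
  simp [hx, hy]

end FiberPartition

namespace IsPartitionInto

variable {n s : ℕ} {P : Finset (Finset (Fin n))} (hP : IsPartitionInto P s)

noncomputable def block (x : Fin n) : Finset (Fin n) :=
  (hP.2 x).exists.choose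

lemma block_mem (x : Fin n) : hP.block x ∈ P :=
  (hP.2 x).exists.choose_spec.1

lemma mem_block (x : Fin n) : x ∈ hP.block x :=
  (hP.2 x).exists.choose_spec.2

lemma card_block (x : Fin n) : #(hP.block x) = s :=
  hP.1 _ (hP.block_mem x)

lemma block_eq_of_mem {x : Fin n} {B : Finset (Fin n)} (hB : B ∈ P) (hx : x ∈ B) :
    hP.block x = B :=
  (hP.2 x).unique ⟨hP.block_mem x, hP.mem_block x⟩ ⟨hB, hx⟩

lemma card_filter_block_eq (x : Fin n) : #{y | hP.block y = hP.block x} = s := by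
  have : ({y | hP.block y = hP.block x} : Finset (Fin n)) = hP.block x := by
    ext y
    simp only [mem_filter, mem_univ, true_and]
    exact ⟨fun h => h ▸ hP.mem_block y, fun hy => hP.block_eq_of_mem (hP.block_mem x) hy⟩
  rw [this, hP.card_block]

lemma injective_block_pair {s' : ℕ} {Q : Finset (Finset (Fin n))} (hQ : IsPartitionInto Q s')
    (hPQ : ∀ B ∈ P, ∀ B' ∈ Q, #(B ∩ B') ≤ 1) :
    Injective fun x => (hP.block x, hQ.block x) := by
  intro x y hxy
  simp only [Prod.mk.injEq] at hxy
  refine card_le_one.1 (hPQ _ (hP.block_mem x) _ (hQ.block_mem x)) _ ?_ _ ?_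
  · exact mem_inter.2 ⟨hP.mem_block x, hQ.mem_block x⟩
  · exact mem_inter.2 ⟨hxy.1 ▸ hP.mem_block y, hxy.2 ▸ hQ.mem_block y⟩

noncomputable def index (x : Fin n) : Fin s :=
  ((hP.block x).orderIsoOfFin (hP.card_block x)).symm ⟨x, hP.mem_block x⟩

lemma injective_block_index : Injective fun x => (hP.block x, hP.index x) := by
  have coe_index : ∀ x, ((hP.block x).orderIsoOfFin (hP.card_block x) (hP.index x) : Fin n) = x :=
    fun x => by simp [index]
  intro x y hxy
  simp only [Prod.mk.injEq] at hxy
  have coe_congr : ∀ (B B' : Finset (Fin n)) (hB : #B = s) (hB' : #B' = s) (i : Fin s),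
      B = B' → (B.orderIsoOfFin hB i : Fin n) = B'.orderIsoOfFin hB' i := by
    rintro B _ _ _ i rfl
    rfl
  rw [← coe_index x, ← coe_index y, hxy.2]
  exact coe_congr _ _ _ _ _ hxy.1

end IsPartitionInto

lemma card_filter_prod_eq_of_bijective {α β γ K : Type*} [Fintype α] [Fintype β]
    [DecidableEq K] [DecidableEq γ] (κ : α → K) (ρ : α → β → γ) (hρ : ∀ a, Bijective (ρ a))
    (k : K) (c : γ) :
    #{p : α × β | (κ p.1, ρ p.1 p.2) = (k, c)} = #{a | κ a = k} := by
  refine card_nbij' Prod.fst (fun a => (a, (Equiv.ofBijective _ (hρ a)).symm c)) ?_ ?_ ?_ ?_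
  · intro p hp
    simp_all
  · intro a ha
    simp_all [Equiv.ofBijective_apply_symm_apply]
  · rintro ⟨a, b⟩ hp
    simp_all [Equiv.symm_apply_eq]
  · intro a _
    rfl

section Grid

variable {n q : ℕ} {K K' : Type*} [DecidableEq K] [DecidableEq K']

def gridPartition (κ : Fin n × Fin q → K) : Finset (Finset (Fin (n * q))) :=
  fiberPartition (κ ∘ finProdFinEquiv.symm)

lemma isPartitionInto_gridPartition {s : ℕ} {κ : Fin n × Fin q → K}
    (hκ : ∀ p, #{p' | κ p' = κ p} = s) : IsPartitionInto (gridPartition κ) s :=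
  isPartitionInto_fiberPartition fun a =>
    (card_equiv finProdFinEquiv.symm (by simp)).trans (hκ (finProdFinEquiv.symm a))

lemma card_inter_le_one_of_mem_gridPartition {κ : Fin n × Fin q → K}
    {κ' : Fin n × Fin q → K'}
    (h : Injective fun p => (κ p, κ' p)) {B B' : Finset (Fin (n * q))}
    (hB : B ∈ gridPartition κ) (hB' : B' ∈ gridPartition κ') : #(B ∩ B') ≤ 1 :=
  card_inter_le_one_of_mem_fiberPartition (h.comp finProdFinEquiv.symm.injective) hB hB'

lemma card_filter_fst_eq (p : Fin n × Fin q) : #{p' : Fin n × Fin q | p'.1 = p.1} = q := by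
  have : ({p' | p'.1 = p.1} : Finset (Fin n × Fin q)) = {p.1} ×ˢ univ := by
    ext ⟨x, y⟩
    simp [eq_comm]
  simp [this]

variable {P : Finset (Finset (Fin n))} (hP : IsPartitionInto P q)

noncomputable def graphLabel (M : Fin q → Fin q → Fin q) (p : Fin n × Fin q) :
    Finset (Fin n) × Fin q :=
  (hP.block p.1, M (hP.index p.1) p.2)

lemma card_filter_graphLabel_eq {M : Fin q → Fin q → Fin q} (hM : ∀ a, Bijective (M a))
    (p : Fin n × Fin q) : #{p' | graphLabel hP M p' = graphLabel hP M p} = q :=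
  (card_filter_prod_eq_of_bijective _ _ (fun a => hM (hP.index a)) _ _).trans
    (hP.card_filter_block_eq p.1)

lemma injective_fst_graphLabel {M : Fin q → Fin q → Fin q} (hM : ∀ a, Bijective (M a)) :
    Injective fun p : Fin n × Fin q => (p.1, graphLabel hP M p) := by
  rintro ⟨x, y⟩ ⟨x', y'⟩ h
  simp only [graphLabel, Prod.mk.injEq] at h
  obtain ⟨rfl, -, h⟩ := h
  rw [(hM _).injective h]

lemma injective_graphLabel_pair_of_orthLatin {M M' : Fin q → Fin q → Fin q}
    (hMM : OrthLatin q M M') :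
    Injective fun p : Fin n × Fin q => (graphLabel hP M p, graphLabel hP M' p) := by
  rintro ⟨x, y⟩ ⟨x', y'⟩ h
  simp only [graphLabel, Prod.mk.injEq] at h
  obtain ⟨⟨hb, h⟩, -, h'⟩ := h
  obtain ⟨hi, rfl⟩ :=
    Prod.mk.inj (hMM (Prod.ext h h' : (M (hP.index x) y, M' (hP.index x) y) = _))
  rw [hP.injective_block_index (Prod.ext hb hi)]

lemma injective_graphLabel_pair_of_injective {Q : Finset (Finset (Fin n))}
    (hQ : IsPartitionInto Q q) {M M' : Fin q → Fin q → Fin q} (hM : ∀ a, Bijective (M a))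
    (hPQ : Injective fun x => (hP.block x, hQ.block x)) :
    Injective fun p : Fin n × Fin q => (graphLabel hP M p, graphLabel hQ M' p) := by
  rintro ⟨x, y⟩ ⟨x', y'⟩ h
  simp only [graphLabel, Prod.mk.injEq] at h
  obtain ⟨⟨hb, h⟩, hb', -⟩ := h
  obtain rfl := hPQ (Prod.ext hb hb')
  rw [(hM _).injective h]

end Grid

theorem IsNearOrthFamily.exists_mul {n q f h : ℕ} {P : Fin h → Finset (Finset (Fin n))}
    (hP : IsNearOrthFamily P q) {M : Fin f → Fin q → Fin q → Fin q}
    (hM : ∀ m a, Bijective (M m a)) (hMM : Pairwise fun m m' => OrthLatin q (M m) (M m')) :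
    ∃ Q : Fin (f * h + 1) → Finset (Finset (Fin (n * q))), IsNearOrthFamily Q q := by
  let Q : Option (Fin f × Fin h) → Finset (Finset (Fin (n * q)))
    | none => gridPartition Prod.fst
    | some (m, i) => gridPartition (graphLabel (hP.1 i) (M m))
  have hQ : IsNearOrthFamily Q q := by
    refine ⟨?_, ?_⟩
    · rintro (_ | ⟨m, i⟩)
      · exact isPartitionInto_gridPartition card_filter_fst_eq
      · exact isPartitionInto_gridPartition (card_filter_graphLabel_eq (hP.1 i) (hM m))
    · rintro (_ | ⟨m, i⟩) (_ | ⟨m', i'⟩) hne B hB B' hB'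
      · exact absurd rfl hne
      · exact card_inter_le_one_of_mem_gridPartition (injective_fst_graphLabel _ (hM m')) hB hB'
      · rw [inter_comm]
        exact card_inter_le_one_of_mem_gridPartition (injective_fst_graphLabel _ (hM m)) hB' hB
      · by_cases hi : i = i'
        · subst hi
          have hm : m ≠ m' := fun hm => hne (hm ▸ rfl)
          exact card_inter_le_one_of_mem_gridPartition
            (injective_graphLabel_pair_of_orthLatin _ (hMM hm)) hB hB'
        · exact card_inter_le_one_of_mem_gridPartition
            (injective_graphLabel_pair_of_injective _ _ (hM m)
              ((hP.1 i).injective_block_pair (hP.1 i') (hP.2 i i' hi))) hB hB'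
  let e : Fin (f * h + 1) ≃ Option (Fin f × Fin h) :=
    (finSuccEquiv _).trans (Equiv.optionCongr finProdFinEquiv.symm)
  exact ⟨Q ∘ e, hQ.comp e.injective⟩

theorem exists_isNearOrthFamily_pow {q f : ℕ} {M : Fin f → Fin q → Fin q → Fin q}
    (hM : ∀ m a, Bijective (M m a)) (hMM : Pairwise fun m m' => OrthLatin q (M m) (M m'))
    (g : ℕ) :
    ∃ P : Fin (∑ i ∈ range g, f ^ i) → Finset (Finset (Fin (q ^ g))),
      IsNearOrthFamily P q := by
  induction g with
  | zero =>
    rw [sum_range_zero]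
    exact ⟨Fin.elim0, fun i => i.elim0, fun i => i.elim0⟩
  | succ g ih =>
    obtain ⟨P, hP⟩ := ih
    rw [geom_sum_succ, pow_succ]
    exact hP.exists_mul hM hMM

lemma OrthLatin.symm {q : ℕ} {L L' : Fin q → Fin q → Fin q} (h : OrthLatin q L L') :
    OrthLatin q L' L :=
  fun _ _ hp => h (Prod.swap_injective hp)

lemma orthLatin_proj {q : ℕ} {L : Fin q → Fin q → Fin q}
    (hL : ∀ b, Bijective fun a => L a b) : OrthLatin q (fun _ b => b) L := by
  rintro ⟨a, b⟩ ⟨a', b'⟩ h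
  simp only [Prod.mk.injEq] at h
  obtain ⟨rfl, h⟩ := h
  rw [(hL b).injective h]

lemma not_orthLatin_self {q : ℕ} (hq : 2 ≤ q) (L : Fin q → Fin q → Fin q) :
    ¬ OrthLatin q L L := by
  intro h
  have hinj : Injective fun p : Fin q × Fin q => L p.1 p.2 :=
    fun p p' hp => h (congrArg (fun t => (t, t)) hp)
  have := Fintype.card_le_of_injective _ hinj
  simp only [Fintype.card_prod, Fintype.card_fin] at this
  nlinarith

lemma exists_mols {q : ℕ} (hq : 2 ≤ q) :
    ∃ L : Fin (numMOLS q) → Fin q → Fin q → Fin q,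
      (∀ i, IsLatinSquare q (L i)) ∧ Pairwise fun i j => OrthLatin q (L i) (L j) := by
  have hmem : numMOLS q ∈ {s | ∃ L : Fin s → Fin q → Fin q → Fin q,
      (∀ i, IsLatinSquare q (L i)) ∧ ∀ i j, i ≠ j → OrthLatin q (L i) (L j)} := by
    refine Nat.sSup_mem ⟨0, Fin.elim0, fun i => i.elim0, fun i => i.elim0⟩
      ⟨Fintype.card (Fin q → Fin q → Fin q), ?_⟩
    rintro s ⟨L, -, hL⟩
    have hinj : Injective L := fun i j hij =>
      by_contra fun hne => not_orthLatin_self hq (L j) (hij ▸ hL i j hne)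
    simpa using Fintype.card_le_of_injective L hinj
  exact hmem

lemma exists_rowBijective_orthLatin {q : ℕ} (hq : 2 ≤ q) :
    ∃ M : Fin (numMOLS q + 1) → Fin q → Fin q → Fin q,
      (∀ m a, Bijective (M m a)) ∧ Pairwise fun m m' => OrthLatin q (M m) (M m') := by
  obtain ⟨L, hL, hLL⟩ := exists_mols hq
  refine ⟨Fin.cons (fun _ b => b) L, fun m => ?_,
    pairwise_fin_succ_iff.2 ⟨fun i => ?_, fun i => ?_, ?_⟩⟩
  · cases m using Fin.cases with
    | zero => exact fun _ => bijective_id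
    | succ i => exact (hL i).1
  · exact (orthLatin_proj (hL i).2).symm
  · exact orthLatin_proj (hL i).2
  · exact hLL

lemma le_maxNearOrthPartitions {n r h : ℕ} (hn : 0 < n) (hr : 1 ≤ r)
    {P : Fin h → Finset (Finset (Fin n))} (hP : IsNearOrthFamily P (r + 1)) :
    h ≤ maxNearOrthPartitions n r := by
  refine le_csSup ⟨Fintype.card (Finset (Finset (Fin n))), ?_⟩ ⟨P, hP⟩
  rintro s ⟨Q, hQ, hQQ⟩
  have hinj : Injective Q := by
    intro i j hij
    by_contra hne
    have hB := (hQ i).block_mem ⟨0, hn⟩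
    have := hQQ i j hne _ hB _ (by rwa [← hij])
    rw [inter_self, (hQ i).card_block] at this
    omega
  simpa using Fintype.card_le_of_injective Q hinj

theorem stmt12_general (r g : ℕ) (hr : 1 ≤ r) :
    ((numMOLS (r + 1) + 1) ^ g - 1) / (numMOLS (r + 1) + 1 - 1) ≤
      maxNearOrthPartitions ((r + 1) ^ g) r := by
  obtain ⟨M, hM, hMM⟩ := exists_rowBijective_orthLatin (q := r + 1) (by omega)
  obtain ⟨P, hP⟩ := exists_isNearOrthFamily_pow hM hMM g
  have hle := le_maxNearOrthPartitions (by positivity) hr hP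
  rcases Nat.eq_zero_or_pos (numMOLS (r + 1)) with hN | hN
  · simp [hN] -- junk division by `N(r+1) = 0`
  · rwa [← Nat.geomSum_eq (by omega)]

/-- `T((r+1)^g) ≥ (f^g - 1)/(f - 1)` where `f = N(r+1) + 1` and `N(r+1)` is the maximum
number of mutually orthogonal Latin squares of order `r+1`. -/
theorem stmt12 (r g : ℕ) (hr : 1 ≤ r) (hg : 1 ≤ g) :
    ((numMOLS (r + 1) + 1) ^ g - 1) / (numMOLS (r + 1) + 1 - 1) ≤
      maxNearOrthPartitions ((r + 1) ^ g) r :=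
  stmt12_general r g hr
end
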